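/- arXiv:1705.03851 — 3 statements merged into one kernel-verified Lean document; each statement's English description precedes it below -/
import Mathlib

section
/- Let T: 𝕋 → 𝕋 be continuous with finite fibers, X ⊆ 𝕋 a perfect set with T(X) ⊆ X, and a, b ∈ X with T(a) = b. Then there exist strictly monotone sequences (aₙ) in X and (bₙ) in 𝕋 with aₙ → a, bₙ → b, and T(aₙ) = bₙ for all n. -/
open Set Filter MeasureTheory

noncomputable def rep (z : UnitAddCircle) : ℝ := (AddCircle.equivIco 1 0 z : ℝ)

def MinimalOn (T : UnitAddCircle → UnitAddCircle) (X : Set UnitAddCircle) : Prop :=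
  ∀ x ∈ X, ∀ y ∈ X, y ∈ closure {z : UnitAddCircle | ∃ n : ℕ, T^[n] x = z}

def PreservesCyclicOrder (T : UnitAddCircle → UnitAddCircle) (X : Set UnitAddCircle) : Prop :=
  ∀ p ∈ X, ∀ q ∈ X, ∀ r ∈ X,
    T p ≠ T q → T q ≠ T r → T r ≠ T p →
    sbtw p q r → sbtw (T p) (T q) (T r)

def IsRotational (T : UnitAddCircle → UnitAddCircle) (X : Set UnitAddCircle) : Prop :=
  IsClosed X ∧ Set.MapsTo T X X ∧ MinimalOn T X ∧ PreservesCyclicOrder T X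

open Topology

/-! Since `X` is perfect, `a` is the limit of a sequence of points of `X \ {a}`. Lifting it and
its image under `T` to `ℝ` near representatives of `a` and `b` gives two real sequences with
finite fibres, because `T` has finite fibres. By the infinitary Erdős–Szekeres theorem, a sequence
with finite fibres in a linear order has a strictly monotone or strictly antitone subsequence;
applying this twice yields a common subsequence along which both lifts are strictly monotone. -/

theorem Filter.Tendsto.exists_subseq_strictMono_or_strictAnti {α : Type*} [LinearOrder α]
    {f : ℕ → α} (hf : Tendsto f atTop cofinite) :
    ∃ φ : ℕ → ℕ, StrictMono φ ∧ (StrictMono (f ∘ φ) ∨ StrictAnti (f ∘ φ)) := by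
  obtain ⟨g, hlt | hnlt⟩ := exists_increasing_or_nonincreasing_subseq (· < ·) f
  · exact ⟨g, g.strictMono, Or.inl fun m n hmn => hlt m n hmn⟩
  obtain ⟨h, hgt | hngt⟩ := exists_increasing_or_nonincreasing_subseq (· > ·) (f ∘ g)
  · exact ⟨g ∘ h, g.strictMono.comp h.strictMono, Or.inr fun m n hmn => hgt m n hmn⟩
  have hconst : ∀ n, f (g (h n)) = f (g (h 0)) := by
    intro n
    rcases n.eq_zero_or_pos with rfl | hn
    · rfl
    exact le_antisymm (not_lt.1 (hnlt _ _ (h.strictMono hn))) (not_lt.1 (hngt 0 n hn))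
  obtain ⟨n, hn⟩ := ((hf.comp (g.strictMono.comp h.strictMono).tendsto_atTop).eventually
    (finite_singleton (f (g (h 0)))).compl_mem_cofinite).exists
  exact (hn (hconst n)).elim

theorem Filter.Tendsto.exists_subseq_strictMono_or_strictAnti_pair {α β : Type*}
    [LinearOrder α] [LinearOrder β] {f : ℕ → α} {g : ℕ → β}
    (hf : Tendsto f atTop cofinite) (hg : Tendsto g atTop cofinite) :
    ∃ φ : ℕ → ℕ, StrictMono φ ∧ (StrictMono (f ∘ φ) ∨ StrictAnti (f ∘ φ)) ∧
      (StrictMono (g ∘ φ) ∨ StrictAnti (g ∘ φ)) := by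
  obtain ⟨φ, hφ, hfφ⟩ := hf.exists_subseq_strictMono_or_strictAnti
  obtain ⟨ψ, hψ, hgφψ⟩ := (hg.comp hφ.tendsto_atTop).exists_subseq_strictMono_or_strictAnti
  refine ⟨φ ∘ ψ, hφ.comp hψ, ?_, hgφψ⟩
  rcases hfφ with hfφ | hfφ
  · exact Or.inl (hfφ.comp hψ)
  · exact Or.inr (hfφ.comp_strictMono hψ)

theorem AccPt.exists_seq_tendsto_nhdsNE {X : Type*} [TopologicalSpace X]
    [FrechetUrysohnSpace X] {s : Set X} {a : X} (ha : AccPt a (𝓟 s)) :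
    ∃ c : ℕ → X, (∀ n, c n ∈ s) ∧ Tendsto c atTop (𝓝[≠] a) := by
  obtain ⟨c, hcs, hca⟩ := mem_closure_iff_seq_limit.1
    (mem_closure_iff_clusterPt.2 (accPt_principal_iff_clusterPt.1 ha))
  exact ⟨c, fun n => (hcs n).1,
    tendsto_nhdsWithin_iff.2 ⟨hca, .of_forall fun n => (hcs n).2⟩⟩

theorem AddCircle.exists_section_continuousAt {p : ℝ} [Fact (0 < p)] (x : ℝ) :
    ∃ L : AddCircle p → ℝ, (∀ z, (L z : AddCircle p) = z) ∧ L x = x ∧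
      ContinuousAt L x := by
  have hp : 0 < p := Fact.out
  refine ⟨fun z => equivIoc p (x - p / 2) z, fun z => coe_equivIoc,
    equivIoc_coe_of_mem ⟨by linarith, by linarith⟩,
    continuous_subtype_val.continuousAt.comp (continuousAt_equivIoc p _ ?_)⟩
  rw [Ne, coe_eq_coe_iff_of_mem_Ico (a := x - p / 2) ⟨by linarith, by linarith⟩
    ⟨le_rfl, by linarith⟩]
  linarith

theorem AddCircle.exists_lift_tendsto {p : ℝ} [Fact (0 < p)] {c : ℕ → AddCircle p} {x : ℝ}
    (hc : Tendsto c atTop (𝓝 (x : AddCircle p))) (hc' : Tendsto c atTop cofinite) :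
    ∃ u : ℕ → ℝ, (∀ n, (u n : AddCircle p) = c n) ∧ Tendsto u atTop (𝓝 x) ∧
      Tendsto u atTop cofinite := by
  obtain ⟨L, hLcoe, hLx, hL⟩ := exists_section_continuousAt (p := p) x
  have hLinj : Function.Injective L := Function.LeftInverse.injective hLcoe
  refine ⟨L ∘ c, fun n => hLcoe (c n), ?_, hLinj.tendsto_cofinite.comp hc'⟩
  simpa only [hLx] using hL.tendsto.comp hc

theorem perturbation_lemma_general
    (T : UnitAddCircle → UnitAddCircle) (hT : Continuous T)
    (hfib : ∀ y : UnitAddCircle, (T ⁻¹' {y}).Finite)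
    (X : Set UnitAddCircle) (hX : Perfect X)
    (a b : UnitAddCircle) (ha : a ∈ X) (hab : T a = b) :
    ∃ u v : ℕ → ℝ,
      (StrictMono u ∨ StrictAnti u) ∧ (StrictMono v ∨ StrictAnti v) ∧
      (∀ n, ((u n : ℝ) : UnitAddCircle) ∈ X) ∧
      (∀ n, T ((u n : ℝ) : UnitAddCircle) = ((v n : ℝ) : UnitAddCircle)) ∧
      (∃ x : ℝ, ((x : ℝ) : UnitAddCircle) = a ∧ Tendsto u atTop (nhds x)) ∧
      (∃ y : ℝ, ((y : ℝ) : UnitAddCircle) = b ∧ Tendsto v atTop (nhds y)) := by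
  obtain ⟨x, rfl⟩ := QuotientAddGroup.mk_surjective a
  obtain ⟨y, rfl⟩ := QuotientAddGroup.mk_surjective b
  obtain ⟨c, hcX, hc⟩ := (hX.acc _ ha).exists_seq_tendsto_nhdsNE
  have hc' : Tendsto c atTop cofinite := hc.mono_right (nhdsNE_le_cofinite _)
  have hca : Tendsto c atTop (𝓝 (x : UnitAddCircle)) := tendsto_nhds_of_tendsto_nhdsWithin hc
  obtain ⟨u, hu, hux, hu'⟩ := AddCircle.exists_lift_tendsto hca hc'
  have hTc : Tendsto (T ∘ c) atTop (𝓝 (y : UnitAddCircle)) := hab ▸ (hT.tendsto _).comp hca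
  obtain ⟨v, hv, hvy, hv'⟩ := AddCircle.exists_lift_tendsto hTc
    ((Tendsto.cofinite_of_finite_preimage_singleton fun z => (hfib z).to_subtype).comp hc')
  obtain ⟨φ, hφ, huφ, hvφ⟩ := hu'.exists_subseq_strictMono_or_strictAnti_pair hv'
  refine ⟨u ∘ φ, v ∘ φ, huφ, hvφ, fun n => ?_, fun n => ?_,
    ⟨x, rfl, hux.comp hφ.tendsto_atTop⟩, ⟨y, rfl, hvy.comp hφ.tendsto_atTop⟩⟩
  · simpa only [Function.comp, hu] using hcX (φ n)
  · simp only [Function.comp, hu, hv]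

theorem perturbation_lemma
    (T : UnitAddCircle → UnitAddCircle) (hT : Continuous T)
    (hfib : ∀ y : UnitAddCircle, (T ⁻¹' {y}).Finite)
    (X : Set UnitAddCircle) (hX : Perfect X) (hinv : Set.MapsTo T X X)
    (a b : UnitAddCircle) (ha : a ∈ X) (hab : T a = b) :
    ∃ u v : ℕ → ℝ,
      (StrictMono u ∨ StrictAnti u) ∧ (StrictMono v ∨ StrictAnti v) ∧
      (∀ n, ((u n : ℝ) : UnitAddCircle) ∈ X) ∧
      (∀ n, T ((u n : ℝ) : UnitAddCircle) = ((v n : ℝ) : UnitAddCircle)) ∧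
      (∃ x : ℝ, ((x : ℝ) : UnitAddCircle) = a ∧ Tendsto u atTop (nhds x)) ∧
      (∃ y : ℝ, ((y : ℝ) : UnitAddCircle) = b ∧ Tendsto v atTop (nhds y)) :=
  perturbation_lemma_general T hT hfib X hX a b ha hab
end

section
/- Let T: 𝕋 → 𝕋 be continuous with finite fibers, and X ⊂ 𝕋 an infinite rotational proper subset for T. Then for every y ∈ X, the fiber (T|_X)⁻¹{y} has cardinality at most two. -/
open Set Filter MeasureTheory

/-!
The accumulation points of `X` form a closed set which, because fibres are finite, `T` maps into
itself; by minimality it contains `X`, so `X` is perfect. If three points of `X` had the same image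
`y`, take `a ∈ X` off that fibre: `a` lies on an arc between two of them, `u` and `v`, and by
perfectness some `b ∈ X` with image different from `y` and `T a` lies on the opposite arc, near the
third. Preservation of cyclic order applied to `(a, v, b)` and `(b, u, a)` then places `y` both
strictly between `T a` and `T b` and strictly between `T b` and `T a`.
-/

open Topology

section CircularOrder

variable {α : Type*} [CircularOrder α] {a b c p q r u v : α}

lemma sbtw_or_sbtw_of_ne (hab : a ≠ b) (hbc : b ≠ c) (hca : c ≠ a) : sbtw a b c ∨ sbtw c b a := by
  by_contra! h
  rw [sbtw_iff_not_btw, sbtw_iff_not_btw, not_not, not_not] at h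
  rcases h.2.antisymm h.1 with h | h | h
  exacts [hab h, hbc h, hca h]

lemma sbtw_of_sbtw_of_sbtw (hau : sbtw u a v) (hbv : sbtw v b u) : sbtw a v b :=
  sbtw_cyclic_left (sbtw_cyclic_left (sbtw_trans_right hbv (sbtw_cyclic_right hau)))

lemma sbtw_or_sbtw_or_sbtw_of_sbtw (h : sbtw p q r) (hap : a ≠ p) (haq : a ≠ q) (har : a ≠ r) :
    sbtw p a q ∨ sbtw q a r ∨ sbtw r a p := by
  have hqp : q ≠ p := fun e => sbtw_irrefl_left (e ▸ h)
  have hrq : r ≠ q := fun e => sbtw_irrefl_right (e ▸ h)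
  rcases sbtw_or_sbtw_of_ne hap.symm haq hqp with hpaq | hqap
  · exact Or.inl hpaq
  rcases sbtw_or_sbtw_of_ne haq.symm har hrq with hqar | hraq
  · exact Or.inr (Or.inl hqar)
  exact Or.inr (Or.inr (sbtw_cyclic_left
    ((sbtw_cyclic_right hqap).trans_left (sbtw_cyclic_right hraq))))

end CircularOrder

namespace AddCircle

variable {p : ℝ} [Fact (0 < p)]

lemma sbtw_coe_of_lt {a x b : ℝ} (hax : a < x) (hxb : x < b) (hb : b < a + p) :
    sbtw (a : AddCircle p) x b := by
  have hp : 0 < p := Fact.out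
  rw [sbtw_iff_btw_not_btw, QuotientAddGroup.btw_coe_iff, QuotientAddGroup.btw_coe_iff,
    (toIcoMod_eq_self hp).2 ⟨hax.le, by linarith⟩, (toIocMod_eq_self hp).2 ⟨by linarith, by linarith⟩,
    ← toIcoMod_add_right, ← toIocMod_add_right, (toIcoMod_eq_self hp).2 ⟨by linarith, by linarith⟩,
    (toIocMod_eq_self hp).2 ⟨by linarith, by linarith⟩]
  exact ⟨hxb.le, by linarith⟩

lemma isOpen_cIoo (u v : AddCircle p) : IsOpen (cIoo u v) := by
  obtain ⟨a, rfl⟩ := QuotientAddGroup.mk_surjective u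
  rcases eq_or_ne (a : AddCircle p) v with rfl | hav
  · simp [cIoo, sbtw_irrefl_left_right]
  obtain ⟨b, ⟨hab, hb⟩, rfl⟩ : ∃ b ∈ Ico a (a + p), (b : AddCircle p) = v :=
    ⟨_, (equivIco p a v).2, coe_equivIco⟩
  have hab : a < b := lt_of_le_of_ne hab fun e => hav (congrArg _ e)
  suffices cIoo (a : AddCircle p) b = (↑) '' Ioo a b from
    this ▸ QuotientAddGroup.isOpenMap_coe _ isOpen_Ioo
  ext z
  constructor
  · intro hz
    rw [mem_cIoo] at hz
    obtain ⟨x, ⟨hax, hx⟩, rfl⟩ : ∃ x ∈ Ico a (a + p), (x : AddCircle p) = z :=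
      ⟨_, (equivIco p a z).2, coe_equivIco⟩
    refine ⟨x, ⟨lt_of_le_of_ne hax ?_, ?_⟩, rfl⟩
    · rintro rfl
      exact sbtw_irrefl_left hz
    by_contra! hbx
    rcases hbx.eq_or_lt with rfl | hbx
    · exact sbtw_irrefl_right hz
    · have := sbtw_coe_of_lt hbx hx (by linarith : a + p < b + p)
      rw [coe_add_period] at this
      exact sbtw_asymm hz this
  · rintro ⟨x, ⟨hax, hxb⟩, rfl⟩
    exact sbtw_coe_of_lt hax hxb hb

end AddCircle

lemma AccPt.apply_of_finite_fiber {α β : Type*} [TopologicalSpace α] [T1Space α]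
    [TopologicalSpace β] {f : α → β} {x : α} {s : Set α} {t : Set β} (h : AccPt x (𝓟 s))
    (hf : ContinuousAt f x) (hfib : (f ⁻¹' {f x}).Finite) (hst : MapsTo f s t) :
    AccPt (f x) (𝓟 t) := by
  rw [accPt_iff_nhds] at h ⊢
  intro U hU
  have hV : f ⁻¹' U ∩ (f ⁻¹' {f x} \ {x})ᶜ ∈ 𝓝 x :=
    inter_mem (hf.preimage_mem_nhds hU) (hfib.sdiff.isClosed.isOpen_compl.mem_nhds (by simp))
  obtain ⟨y, ⟨⟨hyU, hyfib⟩, hys⟩, hyx⟩ := h _ hV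
  exact ⟨f y, ⟨hyU, hst hys⟩, fun e => hyfib ⟨e, hyx⟩⟩

lemma MinimalOn.subset_of_isClosed {T : UnitAddCircle → UnitAddCircle} {X S : Set UnitAddCircle}
    (hmin : MinimalOn T X) {c : UnitAddCircle} (hcX : c ∈ X) (hS : IsClosed S)
    (hTS : MapsTo T S S) (hcS : c ∈ S) : X ⊆ S := fun x hx =>
  closure_minimal (by rintro _ ⟨n, rfl⟩; exact hTS.iterate n hcS) hS (hmin c hcX x hx)

lemma MinimalOn.preperfect {T : UnitAddCircle → UnitAddCircle} {X : Set UnitAddCircle}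
    (hmin : MinimalOn T X) (hT : Continuous T) (hfib : ∀ y, (T ⁻¹' {y}).Finite)
    (hX : IsClosed X) (hTX : MapsTo T X X) (hinf : X.Infinite) : Preperfect X := by
  obtain ⟨c, hc⟩ := hinf.exists_accPt_principal
  rw [preperfect_iff_subset_derivedSet]
  exact hmin.subset_of_isClosed (hX.closure_subset (derivedSet_subset_closure X hc))
    (isClosed_derivedSet X) (fun x hx => hx.apply_of_finite_fiber hT.continuousAt (hfib _) hTX) hc

lemma PreservesCyclicOrder.not_separated_by_fiber {T : UnitAddCircle → UnitAddCircle}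
    {X : Set UnitAddCircle} (hT : PreservesCyclicOrder T X) {u v a b : UnitAddCircle}
    (hu : u ∈ X) (hv : v ∈ X) (ha : a ∈ X) (hb : b ∈ X) (huv : T u = T v) (hau : T a ≠ T u)
    (hbu : T b ≠ T u) (hab : T a ≠ T b) (hauv : sbtw u a v) (hbvu : sbtw v b u) : False := by
  have h₁ := hT a ha v hv b hb (huv ▸ hau) (huv ▸ hbu.symm) hab.symm
    (sbtw_of_sbtw_of_sbtw hauv hbvu)
  have h₂ := hT b hb u hu a ha hbu hau.symm hab (sbtw_of_sbtw_of_sbtw hbvu hauv)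
  rw [huv] at h₂
  exact sbtw_asymm h₁ h₂

lemma PreservesCyclicOrder.not_sbtw_of_apply_eq {T : UnitAddCircle → UnitAddCircle}
    {X : Set UnitAddCircle} (hT : PreservesCyclicOrder T X) (hperf : Preperfect X)
    (hfib : ∀ y, (T ⁻¹' {y}).Finite) (hinf : X.Infinite) {p q r : UnitAddCircle}
    (hp : p ∈ X) (hq : q ∈ X) (hr : r ∈ X) (hqp : T q = T p) (hrp : T r = T p) :
    ¬sbtw p q r := by
  intro hpqr
  obtain ⟨a, ha, hap⟩ := (hinf.sdiff (hfib (T p))).nonempty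
  replace hap : T a ≠ T p := hap
  have hne : ∀ {w}, T w = T p → a ≠ w := fun hw e => hap (e ▸ hw)
  obtain ⟨u, v, w, hu, hv, hw, hup, hvp, hauv, hwvu⟩ : ∃ u v w, u ∈ X ∧ v ∈ X ∧ w ∈ X ∧
      T u = T p ∧ T v = T p ∧ sbtw u a v ∧ sbtw v w u := by
    rcases sbtw_or_sbtw_or_sbtw_of_sbtw hpqr (hne rfl) (hne hqp) (hne hrp) with h | h | h
    · exact ⟨p, q, r, hp, hq, hr, rfl, hqp, h, sbtw_cyclic_left hpqr⟩
    · exact ⟨q, r, p, hq, hr, hp, hqp, hrp, h, sbtw_cyclic_right hpqr⟩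
    · exact ⟨r, p, q, hr, hp, hq, hrp, rfl, h, hpqr⟩
  have hnear : ((cIoo v u) ∩ X).Infinite :=
    .of_accPt ((hperf w hw).nhds_inter ((AddCircle.isOpen_cIoo v u).mem_nhds hwvu))
  obtain ⟨b, ⟨hbvu, hb⟩, hbT⟩ := (hnear.sdiff ((hfib (T p)).union (hfib (T a)))).nonempty
  simp only [mem_union, mem_preimage, mem_singleton_iff, not_or] at hbT
  exact hT.not_separated_by_fiber hu hv ha hb (hup.trans hvp.symm) (hup ▸ hap) (hup ▸ hbT.1)
    (Ne.symm hbT.2) hauv hbvu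

theorem fibers_card_le_two_general
    (T : UnitAddCircle → UnitAddCircle) (hT : Continuous T)
    (hfib : ∀ y : UnitAddCircle, (T ⁻¹' {y}).Finite)
    (X : Set UnitAddCircle) (hrot : IsRotational T X)
    (hinf : X.Infinite) :
    ∀ y ∈ X, ({x ∈ X | T x = y}).ncard ≤ 2 := by
  obtain ⟨hX, hTX, hmin, hpres⟩ := hrot
  have hperf := hmin.preperfect hT hfib hX hTX hinf
  intro y _
  by_contra! hcard
  rw [Set.two_lt_ncard ((hfib y).subset fun x hx => hx.2)] at hcard
  obtain ⟨p, ⟨hp, rfl⟩, q, ⟨hq, hqp⟩, r, ⟨hr, hrp⟩, hpq, hpr, hqr⟩ := hcard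
  rcases sbtw_or_sbtw_of_ne hpq hqr hpr.symm with hpqr | hrqp
  · exact hpres.not_sbtw_of_apply_eq hperf hfib hinf hp hq hr hqp hrp hpqr
  · exact hpres.not_sbtw_of_apply_eq hperf hfib hinf hr hq hp (hqp.trans hrp.symm)
      hrp.symm hrqp

theorem fibers_card_le_two
    (T : UnitAddCircle → UnitAddCircle) (hT : Continuous T)
    (hfib : ∀ y : UnitAddCircle, (T ⁻¹' {y}).Finite)
    (X : Set UnitAddCircle) (hrot : IsRotational T X)
    (hinf : X.Infinite) (hproper : X ≠ Set.univ) :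
    ∀ y ∈ X, ({x ∈ X | T x = y}).ncard ≤ 2 :=
  fibers_card_le_two_general T hT hfib X hrot hinf
end

section
/- Let T: 𝕋 → 𝕋 be continuous with finite fibers, X an infinite rotational proper subset with 0 ∉ X. Writing α = inf X, β = sup X (in [0,1)), α' = max{x ∈ X : T(x) = β}, β' = min{x ∈ X : T(x) = α}, one has α < α' < β' < β and X ∩ (α', β') = ∅. -/
open Set Filter MeasureTheory

/-!
Lift `X` to `S ⊆ (0, 1)` and `T` to `f = rep ∘ T ∘ (↑)`. Preserving the cyclic order means that
`f` never reverses the cyclic order of an increasing triple `p < q < r` of `S`. As `f α' = β` and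
`f β' = α`, a point `x` of `S` strictly between `α'` and `β'` would be sent strictly inside
`(α, β)` (by maximality of `α'` and minimality of `β'`), and `α' < x < β'` would be reversed:
this is the gap. If instead `β' < α'`, the same reasoning forces `f α = β` and `f β = α`, and any
point with image inside `(α, β)` is reversed together with `α` and `β`. Finally, minimality on an
infinite set leaves no isolated points, so `α` and `β` are limits of points of `S` outside the
gap: `α < α'` and `β' < β`.
-/

open Topology

lemma rep_mem_Ico (z : UnitAddCircle) : rep z ∈ Ico (0 : ℝ) 1 := by
  simpa [rep] using (AddCircle.equivIco 1 0 z).2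

lemma coe_rep (z : UnitAddCircle) : (rep z : UnitAddCircle) = z :=
  (AddCircle.equivIco 1 0).symm_apply_apply z

lemma rep_coe {r : ℝ} (hr : r ∈ Ico (0 : ℝ) 1) : rep r = r := by
  rw [rep, AddCircle.coe_equivIco_mk_apply]
  simp [Int.fract_eq_self.mpr hr]

lemma rep_eq_iff {z : UnitAddCircle} {r : ℝ} (hr : r ∈ Ico (0 : ℝ) 1) :
    rep z = r ↔ z = r :=
  ⟨fun h => h ▸ (coe_rep z).symm, fun h => h ▸ rep_coe hr⟩

lemma sbtw_coe_of_lt {a b c : ℝ} (ha : 0 ≤ a) (hab : a < b) (hbc : b < c) (hc : c < 1) :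
    sbtw (a : UnitAddCircle) b c := by
  have hp : (0 : ℝ) < 1 := one_pos
  refine sbtw_of_btw_not_btw ?_ ?_ <;> rw [QuotientAddGroup.btw_coe_iff]
  · rw [(toIcoMod_eq_self hp).mpr ⟨hab.le, by linarith⟩,
      (toIocMod_eq_self hp).mpr ⟨by linarith, by linarith⟩]
    exact hbc.le
  · have hb : toIcoMod hp c b = b + 1 :=
      (toIcoMod_eq_iff hp).mpr ⟨⟨by linarith, by linarith⟩, -1, by simp⟩
    have ha : toIocMod hp c a = a + 1 :=
      (toIocMod_eq_iff hp).mpr ⟨⟨by linarith, by linarith⟩, -1, by simp⟩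
    rw [hb, ha]
    linarith

section IsLeast

variable {α : Type*} [LinearOrder α] {S : Set α} {a b c : α}

lemma IsLeast.exists_mem_Ioo_of_accPt [TopologicalSpace α] [ClosedIciTopology α]
    (ha : IsLeast S a) (hacc : AccPt a (𝓟 S)) (hc : a < c) : ∃ y ∈ S, y ∈ Ioo a c := by
  obtain ⟨y, ⟨hyc, hyS⟩, hya⟩ := accPt_iff_nhds.mp hacc (Iio c) (Iio_mem_nhds hc)
  exact ⟨y, hyS, (ha.2 hyS).lt_of_ne' hya, hyc⟩

lemma IsGreatest.exists_mem_Ioo_of_accPt [TopologicalSpace α] [ClosedIicTopology α]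
    (hb : IsGreatest S b) (hacc : AccPt b (𝓟 S)) (hc : c < b) : ∃ y ∈ S, y ∈ Ioo c b := by
  obtain ⟨y, ⟨hcy, hyS⟩, hyb⟩ := accPt_iff_nhds.mp hacc (Ioi c) (Ioi_mem_nhds hc)
  exact ⟨y, hyS, hcy, (hb.2 hyS).lt_of_ne hyb⟩

lemma mem_Ioo_of_isLeast_of_isGreatest (ha : IsLeast S a) (hb : IsGreatest S b) {y : α}
    (hy : y ∈ S) (hya : y ≠ a) (hyb : y ≠ b) : y ∈ Ioo a b :=
  ⟨(ha.2 hy).lt_of_ne' hya, (hb.2 hy).lt_of_ne hyb⟩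

end IsLeast

def NoReversedTriple (S : Set ℝ) (f : ℝ → ℝ) : Prop :=
  ∀ p ∈ S, ∀ q ∈ S, ∀ r ∈ S, p < q → q < r → ¬ sbtw (f r : UnitAddCircle) (f q) (f p)

namespace NoReversedTriple

variable {S : Set ℝ} {f : ℝ → ℝ} {a b a' b' : ℝ}

lemma notMem_Ioo (hrev : NoReversedTriple S f) (hS : S ⊆ Ico 0 1) (hf : MapsTo f S S)
    (ha : IsLeast S a) (hb : IsGreatest S b) (ha' : IsGreatest {x ∈ S | f x = b} a')
    (hb' : IsLeast {x ∈ S | f x = a} b') {x : ℝ} (hx : x ∈ S) : x ∉ Ioo a' b' := by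
  rintro ⟨ha'x, hxb'⟩
  have hfx : f x ∈ Ioo a b := mem_Ioo_of_isLeast_of_isGreatest ha hb (hf hx)
    (fun h => hxb'.not_ge (hb'.2 ⟨hx, h⟩)) (fun h => ha'x.not_ge (ha'.2 ⟨hx, h⟩))
  refine hrev a' ha'.1.1 x hx b' hb'.1.1 ha'x hxb' ?_
  rw [hb'.1.2, ha'.1.2]
  exact sbtw_coe_of_lt (hS ha.1).1 hfx.1 hfx.2 (hS hb.1).2

lemma mem_Ioo_of_lt (hrev : NoReversedTriple S f) (ha0 : 0 ≤ a) (hb1 : b < 1)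
    (ha' : IsGreatest {x ∈ S | f x = b} a') (hb' : IsLeast {x ∈ S | f x = a} b')
    (hlt : b' < a') {x : ℝ} (hx : x ∈ S) (hfx : f x ∈ Ioo a b) : x ∈ Ioo b' a' := by
  have hsbtw : sbtw (a : UnitAddCircle) (f x) b := sbtw_coe_of_lt ha0 hfx.1 hfx.2 hb1
  refine ⟨lt_of_not_ge fun hxb' => ?_, lt_of_not_ge fun ha'x => ?_⟩
  · rcases hxb'.lt_or_eq with hxb' | rfl
    · refine hrev x hx b' hb'.1.1 a' ha'.1.1 hxb' hlt ?_
      rw [ha'.1.2, hb'.1.2]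
      exact hsbtw.cyclic_left.cyclic_left
    · exact hfx.1.ne' hb'.1.2
  · rcases ha'x.lt_or_eq with ha'x | rfl
    · refine hrev b' hb'.1.1 a' ha'.1.1 x hx hlt ha'x ?_
      rw [ha'.1.2, hb'.1.2]
      exact hsbtw.cyclic_left
    · exact hfx.2.ne ha'.1.2

lemma lt_of_isGreatest_of_isLeast (hrev : NoReversedTriple S f) (hS : S ⊆ Ico 0 1)
    (hf : MapsTo f S S) (hfix : ∀ x ∈ S, f x ≠ x) (hgen : ∃ x ∈ S, f x ≠ a ∧ f x ≠ b)
    (ha : IsLeast S a) (hb : IsGreatest S b) (ha' : IsGreatest {x ∈ S | f x = b} a')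
    (hb' : IsLeast {x ∈ S | f x = a} b') : a' < b' := by
  obtain ⟨x, hx, hxa, hxb⟩ := hgen
  have hfx := mem_Ioo_of_isLeast_of_isGreatest ha hb (hf hx) hxa hxb
  have ha0 : 0 ≤ a := (hS ha.1).1
  have hb1 : b < 1 := (hS hb.1).2
  rcases lt_trichotomy a' b' with hlt | heq | hgt
  · exact hlt
  · exact absurd (ha'.1.2.symm.trans (heq ▸ hb'.1.2)) (hfx.1.trans hfx.2).ne'
  · have hfa : f a = b := by
      by_contra hne
      have := mem_Ioo_of_lt hrev ha0 hb1 ha' hb' hgt ha.1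
        (mem_Ioo_of_isLeast_of_isGreatest ha hb (hf ha.1) (hfix a ha.1) hne)
      exact this.1.not_ge (ha.2 hb'.1.1)
    have hfb : f b = a := by
      by_contra hne
      have := mem_Ioo_of_lt hrev ha0 hb1 ha' hb' hgt hb.1
        (mem_Ioo_of_isLeast_of_isGreatest ha hb (hf hb.1) hne (hfix b hb.1))
      exact this.2.not_ge (hb.2 ha'.1.1)
    have hxab := mem_Ioo_of_lt hrev ha0 hb1 ha' hb' hgt hx hfx
    refine absurd ?_ (hrev a ha.1 x hx b hb.1 ((ha.2 hb'.1.1).trans_lt hxab.1)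
      (hxab.2.trans_le (hb.2 ha'.1.1)))
    rw [hfa, hfb]
    exact sbtw_coe_of_lt ha0 hfx.1 hfx.2 hb1

theorem gap_structure (hrev : NoReversedTriple S f) (hS : S ⊆ Ico 0 1) (hf : MapsTo f S S)
    (hfix : ∀ x ∈ S, f x ≠ x) (hacc : ∀ x ∈ S, AccPt x (𝓟 S))
    (hgen : ∃ x ∈ S, f x ≠ a ∧ f x ≠ b) (ha : IsLeast S a) (hb : IsGreatest S b)
    (ha' : IsGreatest {x ∈ S | f x = b} a') (hb' : IsLeast {x ∈ S | f x = a} b') :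
    a < a' ∧ a' < b' ∧ b' < b ∧ ∀ x ∈ S, x ∉ Ioo a' b' := by
  have hgap x (hx : x ∈ S) := hrev.notMem_Ioo hS hf ha hb ha' hb' hx
  have hlt := hrev.lt_of_isGreatest_of_isLeast hS hf hfix hgen ha hb ha' hb'
  obtain ⟨y, hy, hay, hyb'⟩ :=
    ha.exists_mem_Ioo_of_accPt (hacc a ha.1) ((ha.2 ha'.1.1).trans_lt hlt)
  obtain ⟨z, hz, ha'z, hzb⟩ :=
    hb.exists_mem_Ioo_of_accPt (hacc b hb.1) (hlt.trans_le (hb.2 hb'.1.1))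
  exact ⟨hay.trans_le (not_lt.mp fun h => hgap y hy ⟨h, hyb'⟩), hlt,
    (not_lt.mp fun h => hgap z hz ⟨ha'z, h⟩).trans_lt hzb, hgap⟩

end NoReversedTriple

namespace MinimalOn

variable {T : UnitAddCircle → UnitAddCircle} {X : Set UnitAddCircle}

lemma surjOn (hmin : MinimalOn T X) (hT : Continuous T) (hX : IsClosed X)
    (hmaps : MapsTo T X X) : SurjOn T X X := by
  intro y hy
  have hsub : {z | ∃ n : ℕ, T^[n] (T y) = z} ⊆ T '' X := by
    rintro _ ⟨n, rfl⟩
    exact ⟨T^[n] y, hmaps.iterate n hy, ((Function.Commute.iterate_self T n) y).symm⟩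
  exact (hX.isCompact.image hT).isClosed.closure_subset_iff.mpr hsub (hmin _ (hmaps hy) y hy)

lemma finite_of_isPeriodicPt (hmin : MinimalOn T X) {z : UnitAddCircle} (hz : z ∈ X) {n : ℕ}
    (hn : 0 < n) (hper : Function.IsPeriodicPt T n z) : X.Finite := by
  have horbit : {w | ∃ k : ℕ, T^[k] z = w}.Finite :=
    ((finite_Iio n).image fun k => T^[k] z).subset <| by
      rintro _ ⟨k, rfl⟩
      exact ⟨k % n, Nat.mod_lt k hn, hper.iterate_mod_apply k⟩
  exact horbit.subset fun y hy => horbit.isClosed.closure_subset (hmin z hz y hy)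

lemma apply_ne_self (hmin : MinimalOn T X) (hinf : X.Infinite) {z : UnitAddCircle}
    (hz : z ∈ X) : T z ≠ z :=
  fun hfix =>
    hinf (hmin.finite_of_isPeriodicPt hz one_pos (Function.IsFixedPt.isPeriodicPt hfix 1))

lemma accPt (hmin : MinimalOn T X) (hmaps : MapsTo T X X) (hinf : X.Infinite)
    {z : UnitAddCircle} (hz : z ∈ X) : AccPt z (𝓟 X) := by
  refine accPt_iff_nhds.mpr fun U hU => ?_
  by_contra! hiso
  obtain ⟨_, hwU, n, rfl⟩ := mem_closure_iff_nhds.mp (hmin (T z) (hmaps hz) z hz) U hU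
  have hper : Function.IsPeriodicPt T (n + 1) z := by
    rw [Function.IsPeriodicPt, Function.IsFixedPt, Function.iterate_succ_apply]
    exact hiso _ ⟨hwU, hmaps.iterate n (hmaps hz)⟩
  exact hinf (hmin.finite_of_isPeriodicPt hz n.succ_pos hper)

end MinimalOn

lemma PreservesCyclicOrder.not_sbtw_reverse {T : UnitAddCircle → UnitAddCircle}
    {X : Set UnitAddCircle} (hpres : PreservesCyclicOrder T X) {p q r : UnitAddCircle}
    (hp : p ∈ X) (hq : q ∈ X) (hr : r ∈ X) (hpqr : sbtw p q r) :
    ¬ sbtw (T r) (T q) (T p) := by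
  intro hrev
  refine sbtw_asymm hrev (hpres p hp q hq r hr ?_ ?_ ?_ hpqr) <;> intro h <;> rw [h] at hrev
  · exact sbtw_irrefl_right hrev
  · exact sbtw_irrefl_left hrev
  · exact sbtw_irrefl_left_right hrev

def liftIco (X : Set UnitAddCircle) : Set ℝ := {r | r ∈ Ico (0 : ℝ) 1 ∧ (r : UnitAddCircle) ∈ X}

section liftIco

variable {T : UnitAddCircle → UnitAddCircle} {X : Set UnitAddCircle}

lemma rep_mem_liftIco {z : UnitAddCircle} (hz : z ∈ X) : rep z ∈ liftIco X :=
  ⟨rep_mem_Ico z, (coe_rep z).symm ▸ hz⟩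

lemma mem_Ioo_of_mem_liftIco (h0 : (0 : UnitAddCircle) ∉ X) {r : ℝ} (hr : r ∈ liftIco X) :
    r ∈ Ioo (0 : ℝ) 1 :=
  ⟨hr.1.1.lt_of_ne fun h => h0 (by simpa [← h] using hr.2), hr.1.2⟩

lemma isCompact_liftIco (hX : IsClosed X) (h0 : (0 : UnitAddCircle) ∉ X) :
    IsCompact (liftIco X) := by
  have heq : liftIco X = Icc 0 1 ∩ (↑) ⁻¹' X := by
    refine Subset.antisymm (fun r hr => ⟨Ico_subset_Icc_self hr.1, hr.2⟩) ?_
    rintro r ⟨hr, hrX⟩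
    refine ⟨⟨hr.1, hr.2.lt_of_ne ?_⟩, hrX⟩
    rintro rfl
    exact h0 (AddCircle.coe_period (p := (1 : ℝ)) ▸ hrX)
  rw [heq]
  exact isCompact_Icc.inter_right (hX.preimage (AddCircle.continuous_mk' 1))

lemma infinite_liftIco (hinf : X.Infinite) : (liftIco X).Infinite :=
  Infinite.of_image _ (hinf.mono fun z hz => ⟨rep z, rep_mem_liftIco hz, coe_rep z⟩)

lemma accPt_liftIco (hacc : ∀ z ∈ X, AccPt z (𝓟 X)) (h0 : (0 : UnitAddCircle) ∉ X) {r : ℝ}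
    (hr : r ∈ liftIco X) : AccPt r (𝓟 (liftIco X)) := by
  refine accPt_iff_nhds.mpr fun U hU => ?_
  have hV : U ∩ Ioo 0 1 ∈ 𝓝 r :=
    inter_mem hU (isOpen_Ioo.mem_nhds (mem_Ioo_of_mem_liftIco h0 hr))
  have hV' : (↑) '' (U ∩ Ioo 0 1) ∈ 𝓝 (r : UnitAddCircle) := by
    rw [QuotientAddGroup.nhds_eq]
    exact image_mem_map hV
  obtain ⟨_, ⟨⟨s, ⟨hsU, hs⟩, rfl⟩, hsX⟩, hsr⟩ := accPt_iff_nhds.mp (hacc r hr.2) _ hV'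
  exact ⟨s, ⟨hsU, Ioo_subset_Ico_self hs, hsX⟩, fun h => hsr (h ▸ rfl)⟩

lemma noReversedTriple_liftIco (hpres : PreservesCyclicOrder T X) :
    NoReversedTriple (liftIco X) (fun r => rep (T r)) := by
  intro p hp q hq r hr hpq hqr
  simp only [coe_rep]
  exact hpres.not_sbtw_reverse hp.2 hq.2 hr.2 (sbtw_coe_of_lt hp.1.1 hpq hqr hr.1.2)

lemma finite_sep_liftIco (hfib : ∀ y, (T ⁻¹' {y}).Finite) (c : UnitAddCircle) :
    {r ∈ liftIco X | T r = c}.Finite :=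
  ((hfib c).image rep).subset fun r ⟨hr, hrc⟩ => ⟨r, hrc, rep_coe hr.1⟩

lemma exists_rep_apply_ne (hinf : X.Infinite) (hfib : ∀ y, (T ⁻¹' {y}).Finite) (a b : ℝ) :
    ∃ r ∈ liftIco X, rep (T r) ≠ a ∧ rep (T r) ≠ b := by
  have hfin (c : ℝ) : {r ∈ liftIco X | rep (T r) = c}.Finite :=
    (finite_sep_liftIco hfib c).subset fun r ⟨hr, hrc⟩ => ⟨hr, by rw [← hrc, coe_rep]⟩
  obtain ⟨r, hr, hrab⟩ := ((infinite_liftIco hinf).sdiff ((hfin a).union (hfin b))).nonempty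
  exact ⟨r, hr, fun h => hrab (Or.inl ⟨hr, h⟩), fun h => hrab (Or.inr ⟨hr, h⟩)⟩

lemma sep_liftIco_rep_eq {c : ℝ} (hc : c ∈ Ico (0 : ℝ) 1) :
    {r ∈ liftIco X | rep (T r) = c} = {r ∈ liftIco X | T r = c} := by
  simp only [rep_eq_iff hc]

lemma isGreatest_sep_liftIco (hfib : ∀ y, (T ⁻¹' {y}).Finite) (hsurj : SurjOn T X X) {c : ℝ}
    (hc : c ∈ liftIco X) :
    IsGreatest {r ∈ liftIco X | rep (T r) = c} (sSup {r ∈ liftIco X | T r = c}) := by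
  obtain ⟨z, hz, hzc⟩ := hsurj hc.2
  rw [sep_liftIco_rep_eq hc.1]
  exact (finite_sep_liftIco hfib _).isCompact.isGreatest_sSup
    ⟨rep z, rep_mem_liftIco hz, by rw [coe_rep, hzc]⟩

lemma isLeast_sep_liftIco (hfib : ∀ y, (T ⁻¹' {y}).Finite) (hsurj : SurjOn T X X) {c : ℝ}
    (hc : c ∈ liftIco X) :
    IsLeast {r ∈ liftIco X | rep (T r) = c} (sInf {r ∈ liftIco X | T r = c}) := by
  obtain ⟨z, hz, hzc⟩ := hsurj hc.2
  rw [sep_liftIco_rep_eq hc.1]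
  exact (finite_sep_liftIco hfib _).isCompact.isLeast_sInf
    ⟨rep z, rep_mem_liftIco hz, by rw [coe_rep, hzc]⟩

end liftIco

theorem gap_structure
    (T : UnitAddCircle → UnitAddCircle) (hT : Continuous T)
    (hfib : ∀ y : UnitAddCircle, (T ⁻¹' {y}).Finite)
    (X : Set UnitAddCircle) (hrot : IsRotational T X)
    (hinf : X.Infinite)
    (h0 : (0 : UnitAddCircle) ∉ X)
    (Xr : Set ℝ)
    (hXr : Xr = {r : ℝ | r ∈ Set.Ico (0:ℝ) 1 ∧ ((r : ℝ) : UnitAddCircle) ∈ X})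
    (α β : ℝ) (hα : α = sInf Xr) (hβ : β = sSup Xr)
    (α' β' : ℝ)
    (hα' : α' = sSup {r ∈ Xr | T ((r : ℝ) : UnitAddCircle) = ((β : ℝ) : UnitAddCircle)})
    (hβ' : β' = sInf {r ∈ Xr | T ((r : ℝ) : UnitAddCircle) = ((α : ℝ) : UnitAddCircle)}) :
    α < α' ∧ α' < β' ∧ β' < β ∧ ∀ r ∈ Xr, r ∉ Set.Ioo α' β' := by
  obtain ⟨hX, hmaps, hmin, hpres⟩ := hrot
  obtain rfl : Xr = liftIco X := hXr
  have hcpt := isCompact_liftIco hX h0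
  have hne := (infinite_liftIco hinf).nonempty
  have ha : IsLeast (liftIco X) α := hα ▸ hcpt.isLeast_sInf hne
  have hb : IsGreatest (liftIco X) β := hβ ▸ hcpt.isGreatest_sSup hne
  have hsurj := hmin.surjOn hT hX hmaps
  refine (noReversedTriple_liftIco hpres).gap_structure (fun r hr => hr.1)
    (fun r hr => rep_mem_liftIco (hmaps hr.2))
    (fun r hr h => hmin.apply_ne_self hinf hr.2 ((rep_eq_iff hr.1).mp h))
    (fun r hr => accPt_liftIco (fun z hz => hmin.accPt hmaps hinf hz) h0 hr)
    (exists_rep_apply_ne hinf hfib α β) ha hb ?_ ?_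
  · exact hα' ▸ isGreatest_sep_liftIco hfib hsurj hb.1
  · exact hβ' ▸ isLeast_sep_liftIco hfib hsurj ha.1
end
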